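/- Let A_1, …, A_n be admissible full triangulated subcategories of a triangulated category T forming a semiorthogonal sequence, and let 2 ≤ k ≤ n. Then the sequence A_1, …, A_{k−2}, L_{A_{k−1}}(A_k), A_{k−1}, A_{k+1}, …, A_n (where L_{A_{k−1}}(A_k) is the essential image of A_k under the left mutation through A_{k−1}) is again a semiorthogonal sequence, and it generates the same subcategory: ⟨A_1, …, A_{k−1}, A_k, A_{k+1}, …, A_n⟩ = ⟨A_1, …, A_{k−2}, L_{A_{k−1}}(A_k), A_{k−1}, A_{k+1}, …, A_n⟩. -/

import Mathlib

namespace HPD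

open CategoryTheory Category Limits Pretriangulated

universe w v u

variable {C : Type u} [Category.{v} C]

/-- The "essential image" of a set of objects under an assignment `Φ` on objects. -/
def essImageSet (Φ : C → C) (S : Set C) : Set C :=
  {Y : C | ∃ X ∈ S, Nonempty (Φ X ≅ Y)}

/-- The image of a set of objects under a functor to a full subcategory, regarded as a
set of objects of the ambient category (closed under isomorphism). -/
def projImageSet {Z : C → Prop} (π : C ⥤ ObjectProperty.FullSubcategory Z) (S : Set C) : Set C :=
  essImageSet (fun X : C => (π.obj X).obj) S

section Preadd

variable [Preadditive C]

/-- `HomOrth B A` : every morphism from an object of `B` to an object of `A` vanishes. -/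
def HomOrth (B A : Set C) : Prop :=
  ∀ ⦃X : C⦄, X ∈ B → ∀ ⦃Y : C⦄, Y ∈ A → ∀ f : X ⟶ Y, f = 0

/-- The right orthogonal `A^⊥` of a set of objects `A`. -/
def rightOrth (A : Set C) : Set C :=
  {Y : C | ∀ ⦃X : C⦄, X ∈ A → ∀ f : X ⟶ Y, f = 0}

/-- The left orthogonal `^⊥A` of a set of objects `A`. -/
def leftOrth (A : Set C) : Set C :=
  {X : C | ∀ ⦃Y : C⦄, Y ∈ A → ∀ f : X ⟶ Y, f = 0}

/-- A subcategory (set of objects) is admissible if the inclusion of the corresponding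
full subcategory admits both a left and a right adjoint. -/
def IsAdmissibleSub (A : Set C) : Prop :=
  (ObjectProperty.ι (· ∈ A)).IsRightAdjoint ∧
    (ObjectProperty.ι (· ∈ A)).IsLeftAdjoint

/-- `L : C ⥤ C` is a left mutation functor through `B`, i.e. it is (isomorphic to)
the composition `i_{B^⊥} ∘ i_{B^⊥}^*` of the left adjoint of the inclusion of the right
orthogonal of `B` with this inclusion. -/
def IsLeftMutation (B : Set C) (L : C ⥤ C) : Prop :=
  ∃ p : C ⥤ ObjectProperty.FullSubcategory (· ∈ rightOrth B),
    Nonempty (p ⊣ ObjectProperty.ι (· ∈ rightOrth B)) ∧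
      Nonempty (L ≅ p ⋙ ObjectProperty.ι (· ∈ rightOrth B))

end Preadd

section Triang

variable [HasZeroObject C] [Preadditive C] [HasShift C ℤ]
  [∀ n : ℤ, (shiftFunctor C n).Additive] [Pretriangulated C]

/-- A full triangulated subcategory, recorded as its (isomorphism-closed) set of objects. -/
structure IsTriangSub (A : Set C) : Prop where
  zero_mem : ∀ ⦃Z : C⦄, IsZero Z → Z ∈ A
  iso_mem : ∀ ⦃X Y : C⦄, (X ≅ Y) → X ∈ A → Y ∈ A
  shift_mem : ∀ ⦃X : C⦄ (n : ℤ), X ∈ A → (X⟦n⟧ : C) ∈ A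
  cone_mem : ∀ T : Triangle C, (T ∈ distTriang C) → T.obj₁ ∈ A → T.obj₂ ∈ A → T.obj₃ ∈ A

/-- A full triangulated subcategory is admissible if it moreover has the two adjoints. -/
def IsAdmissible (A : Set C) : Prop :=
  IsTriangSub A ∧ IsAdmissibleSub A

/-- The smallest full triangulated subcategory containing a given set of objects. -/
def generated (S : Set C) : Set C :=
  ⋂₀ {P : Set C | IsTriangSub P ∧ S ⊆ P}

/-- A semiorthogonal sequence of subcategories: no nonzero morphisms from later to
earlier ones. -/
def Semiorthogonal {n : ℕ} (A : Fin n → Set C) : Prop :=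
  ∀ ⦃l k : Fin n⦄, l < k → HomOrth (A k) (A l)

/-- `t` admits a filtration `0 = t_n → t_{n-1} → ⋯ → t_0 = t` whose successive cones lie
in the prescribed subcategories. -/
def HasFiltration {n : ℕ} (A : Fin n → Set C) (t : C) : Prop :=
  ∃ (F : Fin (n + 1) → C) (f : ∀ j : Fin n, F j.succ ⟶ F j.castSucc),
    IsZero (F (Fin.last n)) ∧ F 0 = t ∧
      ∀ j : Fin n, ∃ (a : C) (g : F j.castSucc ⟶ a) (h : a ⟶ (F j.succ)⟦(1 : ℤ)⟧),
        (Triangle.mk (f j) g h ∈ distTriang C) ∧ a ∈ A j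

/-- A semiorthogonal decomposition of (the bounded derived category) `C`. -/
structure IsSOD {n : ℕ} (A : Fin n → Set C) : Prop where
  triangSub : ∀ j, IsTriangSub (A j)
  semiorth : Semiorthogonal A
  filt : ∀ t : C, HasFiltration A t

/-- A semiorthogonal decomposition of a full triangulated subcategory `D` of `C`. -/
structure IsSODWithin (D : Set C) {n : ℕ} (A : Fin n → Set C) : Prop where
  subset : ∀ j, A j ⊆ D
  triangSub : ∀ j, IsTriangSub (A j)
  semiorth : Semiorthogonal A
  filt : ∀ t ∈ D, HasFiltration A t

/-- The `n`-th power of an autoequivalence, applied to an object. -/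
def twistFun (τ : C ≌ C) : ℤ → C → C
  | Int.ofNat m => (fun X : C => τ.functor.obj X)^[m]
  | Int.negSucc m => (fun X : C => τ.inverse.obj X)^[m + 1]

/-- The twist `S(n) = τⁿ(S)` of a set of objects (as an essential image). -/
def twistSet (τ : C ≌ C) (n : ℤ) (S : Set C) : Set C :=
  essImageSet (twistFun τ n) S

/-- A Lefschetz decomposition of `C` of length `i` with respect to the autoequivalence `τ`:
`C = ⟨A 0, (A 1)(1), …, (A (i-1))(i-1)⟩` with `A 0 ⊇ A 1 ⊇ ⋯ ⊇ A (i-1)` admissible. -/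
structure IsLefschetz (τ : C ≌ C) (i : ℕ) (A : ℕ → Set C) : Prop where
  pos : 0 < i
  desc : ∀ m : ℕ, m + 1 < i → A (m + 1) ⊆ A m
  adm : ∀ m : ℕ, m < i → IsAdmissible (A m)
  sod : IsSOD (fun j : Fin i => twistSet τ ((j : ℕ) : ℤ) (A (j : ℕ)))

/-- The primitive component `𝔞_k`, the right orthogonal of `A (k+1)` inside `A k`. -/
def primComp (A : ℕ → Set C) (m : ℕ) : Set C :=
  A m ∩ rightOrth (A (m + 1))

/-- Composition of a finite family of endofunctors: `compFam L = L 0 ∘ L 1 ∘ ⋯ ∘ L (m-1)`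
(so `L (m-1)` is applied first). -/
def compFam : ∀ {m : ℕ}, (Fin m → (C ⥤ C)) → (C ⥤ C)
  | 0, _ => 𝟭 C
  | _ + 1, L => compFam (fun j => L j.succ) ⋙ L 0

end Triang

section Serre

/-- A Serre functor on the `k`-linear triangulated category `C`: a `k`-linear exact
autoequivalence `S` together with pairings exhibiting `Hom(X, Y) ≅ Hom(Y, S X)^*`
naturally in both variables. -/
structure SerreData (k : Type w) [Field k] (C : Type u) [Category.{v} C] [Preadditive C]
    [CategoryTheory.Linear k C] [HasZeroObject C] [HasShift C ℤ]
    [∀ n : ℤ, (shiftFunctor C n).Additive] [Pretriangulated C] where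
  S : C ≌ C
  additive : S.functor.Additive
  linear : letI := additive; S.functor.Linear k
  commShift : S.functor.CommShift ℤ
  triangulated : letI := commShift; S.functor.IsTriangulated
  pairing : ∀ X Y : C, (X ⟶ Y) →ₗ[k] Module.Dual k (Y ⟶ S.functor.obj X)
  pairing_bijective : ∀ X Y : C, Function.Bijective (pairing X Y)
  pairing_nat_left : ∀ ⦃X' X Y : C⦄ (a : X' ⟶ X) (φ : X ⟶ Y) (ψ : Y ⟶ S.functor.obj X'),
    pairing X' Y (a ≫ φ) ψ = pairing X Y φ (ψ ≫ S.functor.map a)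
  pairing_nat_right : ∀ ⦃X Y Y' : C⦄ (b : Y ⟶ Y') (φ : X ⟶ Y) (ψ : Y' ⟶ S.functor.obj X),
    pairing X Y' (φ ≫ b) ψ = pairing X Y φ (b ≫ ψ)

end Serre

/-! Since the inclusion of `B = A_{k-1}` has a right adjoint, the counit gives every `X`
a triangle `b → X → Y → b⟦1⟧` with `b ∈ B` and `Y ∈ B^⊥`; as `b⟦1⟧ ∈ B`, every `Hom(-, W)`
with `W ∈ B^⊥` inverts `X → Y`, so `Y` is the reflection of `X` into `B^⊥`, i.e. `Y ≅ L X`.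
Hence `L X` is a cone of a map from `B` to `X`. For `X ∈ A_k` this places `L X` in the
(triangulated) right orthogonal of every later `A_j` and left orthogonal of every earlier
one, and it shows that `A_k` and `L(A_k)` generate each other modulo `A_{k-1}`. -/

open ZeroObject

section Orthogonals

variable [Preadditive C]

lemma rightOrth_eq (A : Set C) :
    rightOrth A = {Y | ObjectProperty.rightOrthogonal (· ∈ A) Y} := by
  ext Y
  exact ⟨fun hY X f hX => hY hX f, fun hY X hX f => hY f hX⟩

lemma leftOrth_eq (A : Set C) :
    leftOrth A = {X | ObjectProperty.leftOrthogonal (· ∈ A) X} := by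
  ext X
  exact ⟨fun hX Y f hY => hX hY f, fun hX Y hY f => hX f hY⟩

lemma homOrth_iff_subset_rightOrth {A B : Set C} : HomOrth B A ↔ A ⊆ rightOrth B :=
  ⟨fun h _ hY _ hX f => h hX hY f, fun h _ hX _ hY f => h hY hX f⟩

lemma homOrth_iff_subset_leftOrth {A B : Set C} : HomOrth B A ↔ B ⊆ leftOrth A := Iff.rfl

lemma IsLeftMutation.essImageSet_subset_rightOrth {B : Set C} {L : C ⥤ C}
    (hL : IsLeftMutation B L) (S : Set C) : essImageSet L.obj S ⊆ rightOrth B := by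
  rintro _ ⟨X, -, ⟨e⟩⟩
  obtain ⟨p, -, ⟨eL⟩⟩ := hL
  rw [rightOrth_eq]
  exact (ObjectProperty.rightOrthogonal _).prop_of_iso ((eL.app X).symm ≪≫ e)
    ((rightOrth_eq B).le (p.obj X).property)

end Orthogonals

lemma nonempty_iso_of_isLocal {P : ObjectProperty C}
    {p : C ⥤ P.FullSubcategory} (adj : p ⊣ P.ι) {X Y : C} {g : X ⟶ Y} (hY : P Y)
    (hg : P.isLocal g) : Nonempty ((p.obj X).obj ≅ Y) := by
  have hη : P.isLocal (adj.unit.app X) := fun Z hZ =>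
    ObjectProperty.isLocal_adj_unit_app adj X Z ⟨⟨Z, hZ⟩, rfl⟩
  obtain ⟨φ, hφ : adj.unit.app X ≫ φ = g⟩ := (hη Y hY).2 g
  have hφloc : P.isLocal φ := P.isLocal.of_precomp _ _ hη (hφ ▸ hg)
  have := (P.isLocal_iff_isIso φ (p.obj X).property hY).1 hφloc
  exact ⟨asIso φ⟩

section Exchange

variable {α : Type*} {n : ℕ} (A : Fin n → α) {i : ℕ} (hi : i + 1 < n) (M : α)

def replaceSwap : Fin n → α :=
  fun j => if (j : ℕ) = i then M else if (j : ℕ) = i + 1 then A ⟨i, by omega⟩ else A j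

lemma replaceSwap_self : replaceSwap A hi M ⟨i, by omega⟩ = M := if_pos rfl

lemma replaceSwap_succ : replaceSwap A hi M ⟨i + 1, hi⟩ = A ⟨i, by omega⟩ := by
  simp [replaceSwap]

lemma replaceSwap_of_ne {j : Fin n} (h₁ : (j : ℕ) ≠ i) (h₂ : (j : ℕ) ≠ i + 1) :
    replaceSwap A hi M j = A j := by
  simp [replaceSwap, h₁, h₂]

variable [Preadditive C]

lemma Semiorthogonal.replaceSwap_of_homOrth {A : Fin n → Set C} {M : Set C}
    (hso : Semiorthogonal A) (hM : HomOrth (A ⟨i, by omega⟩) M)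
    (hlater : ∀ j : Fin n, i + 1 < (j : ℕ) → HomOrth (A j) M)
    (hearlier : ∀ j : Fin n, (j : ℕ) < i → HomOrth M (A j)) :
    Semiorthogonal (replaceSwap A hi M) := by
  intro l k hlk
  have hlk' : (l : ℕ) < k := hlk
  simp only [replaceSwap]
  split_ifs
  all_goals first
    | omega
    | exact hM
    | exact hlater _ (by omega)
    | exact hearlier _ (by omega)
    | exact hso (by simp only [Fin.lt_def]; omega)

end Exchange

section Triangulated

variable [HasZeroObject C] [Preadditive C] [HasShift C ℤ]
  [∀ n : ℤ, (shiftFunctor C n).Additive] [Pretriangulated C]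

lemma IsTriangSub.mem_of_distTriang₂ {P : Set C} (hP : IsTriangSub P) {T : Triangle C}
    (hT : T ∈ distTriang C) (h₁ : T.obj₁ ∈ P) (h₃ : T.obj₃ ∈ P) : T.obj₂ ∈ P :=
  hP.cone_mem _ (inv_rot_of_distTriang T hT) (hP.shift_mem (-1) h₃) h₁

lemma IsTriangSub.isTriangulated {A : Set C} (hA : IsTriangSub A) :
    ObjectProperty.IsTriangulated (· ∈ A) :=
  have : ObjectProperty.IsClosedUnderIsomorphisms (· ∈ A) := ⟨fun e hX => hA.iso_mem e hX⟩
  { exists_zero := ⟨0, isZero_zero C, hA.zero_mem (isZero_zero C)⟩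
    isStableUnderShiftBy := fun n => ⟨fun _ hX => hA.shift_mem n hX⟩
    toIsTriangulatedClosed₂ := .mk' fun _ hT h₁ h₃ => hA.mem_of_distTriang₂ hT h₁ h₃ }

lemma isTriangSub_setOf (P : ObjectProperty C) [P.IsTriangulated]
    [P.IsClosedUnderIsomorphisms] : IsTriangSub {X | P X} where
  zero_mem _ hZ := P.prop_of_isZero hZ
  iso_mem _ _ e hX := P.prop_of_iso e hX
  shift_mem _ n hX := P.le_shift n _ hX
  cone_mem T hT h₁ h₂ := P.ext_of_isTriangulatedClosed₃ T hT h₁ h₂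

lemma IsTriangSub.rightOrth {A : Set C} (hA : IsTriangSub A) : IsTriangSub (rightOrth A) := by
  have := hA.isTriangulated
  rw [rightOrth_eq]
  exact isTriangSub_setOf _

lemma IsTriangSub.leftOrth {A : Set C} (hA : IsTriangSub A) : IsTriangSub (leftOrth A) := by
  have := hA.isTriangulated
  rw [leftOrth_eq]
  exact isTriangSub_setOf _

lemma isTriangSub_generated (S : Set C) : IsTriangSub (generated S) where
  zero_mem _ hZ := Set.mem_sInter.2 fun _ hP => hP.1.zero_mem hZ
  iso_mem _ _ e hX := Set.mem_sInter.2 fun P hP => hP.1.iso_mem e (Set.mem_sInter.1 hX P hP)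
  shift_mem _ m hX := Set.mem_sInter.2 fun P hP => hP.1.shift_mem m (Set.mem_sInter.1 hX P hP)
  cone_mem T hT h₁ h₂ := Set.mem_sInter.2 fun P hP =>
    hP.1.cone_mem T hT (Set.mem_sInter.1 h₁ P hP) (Set.mem_sInter.1 h₂ P hP)

lemma subset_generated (S : Set C) : S ⊆ generated S :=
  fun _ hX => Set.mem_sInter.2 fun _ hP => hP.2 hX

lemma generated_subset {S P : Set C} (hP : IsTriangSub P) (hSP : S ⊆ P) : generated S ⊆ P :=
  fun _ hX => Set.mem_sInter.1 hX P ⟨hP, hSP⟩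

lemma generated_subset_generated {S T : Set C} (h : S ⊆ generated T) :
    generated S ⊆ generated T :=
  generated_subset (isTriangSub_generated T) h

lemma subset_generated_iUnion {ι : Type*} (A : ι → Set C) (j : ι) :
    A j ⊆ generated (⋃ j, A j) :=
  (Set.subset_iUnion A j).trans (subset_generated _)

section Mutation

variable {B P S : Set C} {L : C ⥤ C}

lemma eq_zero_of_comp_shift_eq_zero (hB : IsTriangSub B) {b X : C} {ε : b ⟶ X}
    (hε : ObjectProperty.isColocal (· ∈ B) ε) {Z : C} (hZ : Z ∈ B)
    {ψ : Z ⟶ b⟦(1 : ℤ)⟧} (hψ : ψ ≫ ε⟦(1 : ℤ)⟧' = 0) : ψ = 0 := by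
  let adj := (shiftEquiv C (1 : ℤ)).symm.toAdjunction
  have homEquiv_zero : ∀ {W : C}, adj.homEquiv Z W 0 = 0 := by
    intro W
    rw [Adjunction.homEquiv_unit, Functor.map_zero, comp_zero]
  obtain ⟨u, rfl⟩ := (adj.homEquiv Z b).surjective ψ
  have hu : u ≫ ε = 0 ≫ ε := by
    apply (adj.homEquiv _ _).injective
    rw [adj.homEquiv_naturality_right, zero_comp, homEquiv_zero]
    exact hψ
  rw [(hε _ (hB.shift_mem (-1) hZ)).1 hu]
  exact homEquiv_zero

lemma mem_rightOrth_of_distTriang (hB : IsTriangSub B) {T : Triangle C} (hT : T ∈ distTriang C)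
    (hcoloc : ObjectProperty.isColocal (· ∈ B) T.mor₁) : T.obj₃ ∈ rightOrth B := by
  intro Z hZ φ
  have hφ : φ ≫ T.mor₃ = 0 := eq_zero_of_comp_shift_eq_zero hB hcoloc hZ (by
    rw [assoc, comp_distTriang_mor_zero₃₁ T hT, comp_zero])
  obtain ⟨χ, rfl⟩ := Triangle.coyoneda_exact₃ T hT φ hφ
  obtain ⟨u, rfl⟩ := (hcoloc Z hZ).2 χ
  simp only [assoc, comp_distTriang_mor_zero₁₂ T hT, comp_zero]

lemma exists_distTriang_mem_rightOrth (hB : IsTriangSub B)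
    (hR : (ObjectProperty.ι (· ∈ B)).IsLeftAdjoint) (X : C) :
    ∃ (b Y : C) (f : b ⟶ X) (g : X ⟶ Y) (h : Y ⟶ b⟦(1 : ℤ)⟧),
      Triangle.mk f g h ∈ distTriang C ∧ b ∈ B ∧ Y ∈ rightOrth B := by
  let adj := Adjunction.ofIsLeftAdjoint (ObjectProperty.ι (· ∈ B))
  obtain ⟨Y, g, h, hT⟩ := distinguished_cocone_triangle (adj.counit.app X)
  refine ⟨_, Y, _, g, h, hT, ((ObjectProperty.ι (· ∈ B)).rightAdjoint.obj X).property,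
    mem_rightOrth_of_distTriang hB hT fun Z hZ => ?_⟩
  exact ObjectProperty.isColocal_adj_counit_app adj X Z ⟨⟨Z, hZ⟩, rfl⟩

def HasMutationTriangles (B : Set C) (L : C ⥤ C) : Prop :=
  ∀ X : C, ∃ b ∈ B, ∃ (f : b ⟶ X) (g : X ⟶ L.obj X) (h : L.obj X ⟶ b⟦(1 : ℤ)⟧),
    Triangle.mk f g h ∈ distTriang C

lemma IsLeftMutation.hasMutationTriangles (hB : IsTriangSub B)
    (hR : (ObjectProperty.ι (· ∈ B)).IsLeftAdjoint) (hL : IsLeftMutation B L) :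
    HasMutationTriangles B L := by
  obtain ⟨p, ⟨adj⟩, ⟨eL⟩⟩ := hL
  intro X
  obtain ⟨b, Y, f, g, h, hT, hb, hY⟩ := exists_distTriang_mem_rightOrth hB hR X
  have hg : ObjectProperty.isLocal (· ∈ rightOrth B) g := by
    intro W hW
    have := hB.isTriangulated
    rw [rightOrth_eq, Set.mem_ofPred_eq, ← ObjectProperty.isLocal_trW] at hW
    exact hW g (ObjectProperty.trW.mk' _ hT hb)
  obtain ⟨e⟩ := nonempty_iso_of_isLocal adj hY hg
  let e' : L.obj X ≅ Y := eL.app X ≪≫ e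
  refine ⟨b, hb, f, g ≫ e'.inv, e'.hom ≫ h, isomorphic_distinguished _ hT _ ?_⟩
  exact Triangle.isoMk _ _ (Iso.refl _) (Iso.refl _) e'
    (by dsimp [Triangle.mk]; simp) (by dsimp [Triangle.mk]; simp) (by dsimp [Triangle.mk]; simp)

lemma HasMutationTriangles.essImageSet_subset (htri : HasMutationTriangles B L)
    (hP : IsTriangSub P) (hB : B ⊆ P) (hS : S ⊆ P) : essImageSet L.obj S ⊆ P := by
  rintro _ ⟨X, hX, ⟨e⟩⟩
  obtain ⟨b, hb, f, g, h, hT⟩ := htri X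
  exact hP.iso_mem e (hP.cone_mem _ hT (hB hb) (hS hX))

lemma HasMutationTriangles.mem_of_obj_mem (htri : HasMutationTriangles B L)
    (hP : IsTriangSub P) (hB : B ⊆ P) {X : C} (hLX : L.obj X ∈ P) : X ∈ P := by
  obtain ⟨b, hb, f, g, h, hT⟩ := htri X
  exact hP.mem_of_distTriang₂ hT (hB hb) hLX

variable {n : ℕ} {A : Fin n → Set C} {i : ℕ} (hi : i + 1 < n)

lemma generated_iUnion_replaceSwap {M : Set C} (hM : M ⊆ generated (⋃ j, A j))
    (hA : A ⟨i + 1, hi⟩ ⊆ generated (⋃ j, replaceSwap A hi M j)) :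
    generated (⋃ j, A j) = generated (⋃ j, replaceSwap A hi M j) := by
  apply subset_antisymm <;> refine generated_subset_generated (Set.iUnion_subset fun j => ?_)
  · by_cases hj : (j : ℕ) = i + 1
    · obtain rfl : j = ⟨i + 1, hi⟩ := Fin.ext hj
      exact hA
    by_cases hj' : (j : ℕ) = i
    · obtain rfl : j = ⟨i, Nat.lt_of_succ_lt hi⟩ := Fin.ext hj'
      simpa only [replaceSwap_succ] using
        subset_generated_iUnion (replaceSwap A hi M) ⟨i + 1, hi⟩
    · simpa only [replaceSwap_of_ne A hi M hj' hj] using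
        subset_generated_iUnion (replaceSwap A hi M) j
  · by_cases hj : (j : ℕ) = i
    · obtain rfl : j = ⟨i, Nat.lt_of_succ_lt hi⟩ := Fin.ext hj
      simpa only [replaceSwap_self] using hM
    by_cases hj' : (j : ℕ) = i + 1
    · obtain rfl : j = ⟨i + 1, hi⟩ := Fin.ext hj'
      simpa only [replaceSwap_succ] using subset_generated_iUnion A ⟨i, by omega⟩
    · simpa only [replaceSwap_of_ne A hi M hj hj'] using subset_generated_iUnion A j

lemma HasMutationTriangles.generated_iUnion_replaceSwap
    (htri : HasMutationTriangles (A ⟨i, by omega⟩) L) :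
    generated (⋃ j, A j) =
      generated (⋃ j, replaceSwap A hi (essImageSet L.obj (A ⟨i + 1, hi⟩)) j) := by
  set M := essImageSet L.obj (A ⟨i + 1, hi⟩)
  refine HPD.generated_iUnion_replaceSwap hi ?_ fun X hX => ?_
  · exact htri.essImageSet_subset (isTriangSub_generated _) (subset_generated_iUnion A _)
      (subset_generated_iUnion A _)
  · refine htri.mem_of_obj_mem (isTriangSub_generated _) ?_ ?_
    · simpa only [replaceSwap_succ] using
        subset_generated_iUnion (replaceSwap A hi M) ⟨i + 1, hi⟩
    · refine subset_generated_iUnion (replaceSwap A hi M) ⟨i, by omega⟩ ?_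
      rw [replaceSwap_self]
      exact ⟨X, hX, ⟨Iso.refl _⟩⟩

lemma Semiorthogonal.replaceSwap_essImageSet (hso : Semiorthogonal A)
    (hA : ∀ j, IsTriangSub (A j)) (htri : HasMutationTriangles (A ⟨i, by omega⟩) L)
    (hM : essImageSet L.obj (A ⟨i + 1, hi⟩) ⊆ rightOrth (A ⟨i, by omega⟩)) :
    Semiorthogonal (replaceSwap A hi (essImageSet L.obj (A ⟨i + 1, hi⟩))) := by
  refine hso.replaceSwap_of_homOrth hi (homOrth_iff_subset_rightOrth.2 hM)
    (fun j hj => ?_) fun j hj => ?_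
  · rw [homOrth_iff_subset_rightOrth]
    exact htri.essImageSet_subset (hA j).rightOrth
      (homOrth_iff_subset_rightOrth.1 (hso (by simp only [Fin.lt_def]; omega)))
      (homOrth_iff_subset_rightOrth.1 (hso hj))
  · rw [homOrth_iff_subset_leftOrth]
    exact htri.essImageSet_subset (hA j).leftOrth
      (homOrth_iff_subset_leftOrth.1 (hso hj))
      (homOrth_iff_subset_leftOrth.1 (hso (by simp only [Fin.lt_def]; omega)))

end Mutation

end Triangulated

section Statements

variable [HasZeroObject C] [Preadditive C] [HasShift C ℤ]
  [∀ n : ℤ, (shiftFunctor C n).Additive] [Pretriangulated C]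

/-- given a semiorthogonal sequence of admissible subcategories
`A 0, …, A (n-1)` (1-based: `A_1, …, A_n`) and `2 ≤ k ≤ n`, replacing the pair
`(A_{k-1}, A_k)` by `(L_{A_{k-1}}(A_k), A_{k-1})` again yields a semiorthogonal
sequence generating the same subcategory. -/
theorem statement9 {n : ℕ} (A : Fin n → Set C)
    (hadm : ∀ j, IsAdmissible (A j)) (hso : Semiorthogonal A)
    (k : ℕ) (hk2 : 2 ≤ k) (hkn : k ≤ n)
    (L : C ⥤ C) (hL : IsLeftMutation (A ⟨k - 2, by omega⟩) L) :
    Semiorthogonal (fun j : Fin n =>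
      if (j : ℕ) = k - 2 then essImageSet L.obj (A ⟨k - 1, by omega⟩)
      else if (j : ℕ) = k - 1 then A ⟨k - 2, by omega⟩
      else A j) ∧
    generated (⋃ j, A j) =
      generated (⋃ j : Fin n,
        (if (j : ℕ) = k - 2 then essImageSet L.obj (A ⟨k - 1, by omega⟩)
         else if (j : ℕ) = k - 1 then A ⟨k - 2, by omega⟩
         else A j)) := by
  -- with `k = i + 2`, both families in the goal are `replaceSwap A hi _` by definition
  obtain ⟨i, rfl⟩ : ∃ i, k = i + 2 := ⟨k - 2, by omega⟩
  have hi : i + 1 < n := by omega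
  have htri : HasMutationTriangles (A ⟨i, by omega⟩) L :=
    hL.hasMutationTriangles (hadm _).1 (hadm _).2.2
  exact ⟨hso.replaceSwap_essImageSet hi (fun j => (hadm j).1) htri
      (hL.essImageSet_subset_rightOrth _),
    htri.generated_iUnion_replaceSwap hi⟩

end Statements
end HPD
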